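/- arXiv:2206.12593 — 5 statements merged into one kernel-verified Lean document; each statement's English description precedes it below -/
import Mathlib

section
/- If C is a minimal linear code of length n and dimension k over F_q, then n ≥ (k-1)(q+1). -/
/-!
The coordinate functionals `εᵢ` of `C`, viewed in the `k`-dimensional dual `C*`, form a cutting
family: every hyperplane of `C*` is spanned by the `εᵢ` it contains. Indeed a hyperplane is the
annihilator of some codeword `c ≠ 0`, and by minimality the only codewords killed by all `εᵢ` with
`cᵢ = 0` are the multiples of `c`.

For a cutting family, pick a codimension-2 subspace `T` containing the fewest, say `t`, of the
`εᵢ`. Every hyperplane `H ⊇ T` is spanned by its `εᵢ`, and each hyperplane of `H` contains at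
least `t` of them; so `H` contains at least `(k - 1) + t`: a basis of `H` chosen among them, plus
at least `t` on a hyperplane of `H` avoiding that basis. The `q + 1` hyperplanes through `T`
pairwise meet in `T`, hence `n ≥ t + (q + 1)(k - 1)`.
-/

open Module Submodule Finset

section Pencil

variable {F W : Type*} [Field F] [AddCommGroup W] [Module F W]

variable (F) in
/-- The `q + 1` lines through the origin of the plane `F × F` are the kernels of these. -/
def pencilFunctional : Option F → (F × F →ₗ[F] F)
  | none => LinearMap.fst F F F
  | some a => LinearMap.snd F F F - a • LinearMap.fst F F F

theorem pencilFunctional_ne_zero (j : Option F) : pencilFunctional F j ≠ 0 := by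
  cases j with
  | none => exact fun h => by simpa [pencilFunctional] using LinearMap.congr_fun h (1, 0)
  | some a => exact fun h => by simpa [pencilFunctional] using LinearMap.congr_fun h (0, 1)

theorem eq_zero_of_pencilFunctional_eq_zero {j j' : Option F} (hjj' : j ≠ j') {p : F × F}
    (hj : pencilFunctional F j p = 0) (hj' : pencilFunctional F j' p = 0) : p = 0 := by
  obtain ⟨x, y⟩ := p
  cases j <;> cases j' <;> simp_all [pencilFunctional, sub_eq_zero]

theorem exists_pencil_of_finrank_add_two_eq [FiniteDimensional F W] {T : Submodule F W}
    (hT : finrank F T + 2 = finrank F W) :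
    ∃ H : Option F → Submodule F W, (∀ j, T ≤ H j) ∧
      (∀ j, finrank F (H j) + 1 = finrank F W) ∧ Pairwise fun j j' => H j ⊓ H j' ≤ T := by
  have hquot : finrank F (W ⧸ T) = finrank F (F × F) := by
    have := T.finrank_quotient_add_finrank
    rw [finrank_prod, finrank_self]
    omega
  let π : W →ₗ[F] F × F := (LinearEquiv.ofFinrankEq _ _ hquot).toLinearMap ∘ₗ T.mkQ
  have hπ : LinearMap.ker π = T := by simp [π, LinearMap.ker_comp, LinearEquiv.ker]
  have hπsurj : Function.Surjective π := by simpa [π] using T.mkQ_surjective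
  refine ⟨fun j => LinearMap.ker (pencilFunctional F j ∘ₗ π), fun j => ?_, fun j => ?_, ?_⟩
  · exact hπ ▸ LinearMap.ker_le_ker_comp π _
  · refine Dual.finrank_ker_add_one_of_ne_zero fun h => pencilFunctional_ne_zero j ?_
    exact LinearMap.ext fun p => by
      obtain ⟨x, rfl⟩ := hπsurj p
      exact LinearMap.congr_fun h x
  · intro j j' hjj' x hx
    rw [← hπ, LinearMap.mem_ker]
    exact eq_zero_of_pencilFunctional_eq_zero hjj' hx.1 hx.2

end Pencil

section Cutting

variable {F W ι : Type*} [Field F] [AddCommGroup W] [Module F W]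

variable (F) in
/-- In projective terms: the points `⟨ε i⟩` form a cutting (strong) blocking set. -/
def IsCutting (ε : ι → W) : Prop :=
  ∀ H : Submodule F W, finrank F H + 1 = finrank F W → span F (ε '' {i | ε i ∈ H}) = H

variable [Fintype ι]

open scoped Classical in
theorem finrank_add_le_card_filter_mem {ε : ι → W} {Y : Submodule F W} (hY : Y ≠ ⊥)
    (hspan : span F (ε '' {i | ε i ∈ Y}) = Y) {t : ℕ}
    (ht : ∀ U ≤ Y, finrank F U + 1 = finrank F Y → t ≤ #{i | ε i ∈ U}) :
    finrank F Y + t ≤ #{i | ε i ∈ Y} := by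
  obtain ⟨b, hbY, -, hbspan, hb⟩ :=
    exists_linearIndepOn_extension (linearIndepOn_empty F ε) (Set.empty_subset {i | ε i ∈ Y})
  have hbasis : span F (Set.range fun i : b => ε i) = Y := by
    rw [← Set.image_eq_range]
    refine le_antisymm (span_le.2 ?_) (hspan ▸ span_le.2 hbspan)
    rintro _ ⟨i, hi, rfl⟩
    exact hbY hi
  subst hbasis
  let B := Basis.span hb.linearIndependent
  have : FiniteDimensional F (span F (Set.range fun i : b => ε i)) :=
    .span_of_finite F (Set.finite_range _)
  obtain ⟨i₀⟩ : Nonempty b := by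
    by_contra h
    simp_all
  have hB : ∀ i : b, B.sumCoords ⟨ε i, subset_span ⟨i, rfl⟩⟩ = 1 := fun i => by simp [B]
  let U := (LinearMap.ker B.sumCoords).map (span F (Set.range fun i : b => ε i)).subtype
  have hU := ht U (map_subtype_le _ _) <| by
    rw [finrank_map_subtype_eq]
    refine Dual.finrank_ker_add_one_of_ne_zero fun h => ?_
    simpa [h] using hB i₀
  have hUb : Disjoint ({i | ε i ∈ U} : Finset ι) b.toFinset := by
    refine disjoint_left.2 fun i hiU hib => ?_
    obtain ⟨y, hy, hyi⟩ := mem_map.1 (mem_filter.1 hiU).2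
    have hyB : y = ⟨ε i, subset_span ⟨⟨i, Set.mem_toFinset.1 hib⟩, rfl⟩⟩ := Subtype.ext hyi
    rw [LinearMap.mem_ker, hyB] at hy
    exact one_ne_zero ((hB ⟨i, Set.mem_toFinset.1 hib⟩).symm.trans hy)
  calc finrank F (span F (Set.range fun i : b => ε i)) + t
      ≤ #b.toFinset + #{i | ε i ∈ U} := by
        rw [finrank_eq_card_basis B, Set.toFinset_card, add_comm]
        omega
    _ = #(({i | ε i ∈ U} : Finset ι) ∪ b.toFinset) := by rw [card_union_of_disjoint hUb, add_comm]
    _ ≤ _ := card_le_card <| union_subset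
          (fun i hi => mem_filter.2 ⟨mem_univ i, map_subtype_le _ _ (mem_filter.1 hi).2⟩)
          (fun i hi => mem_filter.2 ⟨mem_univ i, subset_span ⟨⟨i, Set.mem_toFinset.1 hi⟩, rfl⟩⟩)

open scoped Classical in
theorem IsCutting.finrank_sub_one_mul_le_card [Fintype F] [FiniteDimensional F W] {ε : ι → W}
    (hε : IsCutting F ε) : (finrank F W - 1) * (Fintype.card F + 1) ≤ Fintype.card ι := by
  set k := finrank F W
  rcases Nat.lt_or_ge k 2 with hk | hk
  · rw [Nat.sub_eq_zero_of_le (by omega), zero_mul]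
    exact Nat.zero_le _
  obtain ⟨T, hT, hTmin⟩ := (measure fun U : Submodule F W => #{i | ε i ∈ U}).wf.has_min
    {T | finrank F T + 2 = k} <| by
      obtain ⟨v, hv⟩ := exists_linearIndependent_of_le_finrank (R := F) (M := W) (n := k - 2)
        (by omega)
      exact ⟨_, show _ = k by rw [finrank_span_eq_card hv, Fintype.card_fin]; omega⟩
  obtain ⟨H, hTH, hH, hHT⟩ := exists_pencil_of_finrank_add_two_eq hT
  have hcardH : ∀ j, k - 1 + #{i | ε i ∈ T} ≤ #{i | ε i ∈ H j} := fun j => by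
    have hHk : finrank F (H j) = k - 1 := by have := hH j; omega
    refine hHk ▸ finrank_add_le_card_filter_mem (one_le_finrank_iff.1 (by omega)) (hε _ (hH j))
      fun U _ hU => ?_
    exact not_lt.1 (hTmin U (show finrank F U + 2 = k by omega))
  let A : Option F → Finset ι := fun j =>
    ({i | ε i ∈ H j} : Finset ι) \ ({i | ε i ∈ T} : Finset ι)
  have hA : ∀ j, k - 1 ≤ #(A j) := fun j => by
    rw [card_sdiff_of_subset (monotone_filter_right _ fun i _ hi => hTH j hi)]
    exact Nat.le_sub_of_add_le (hcardH j)
  have hAdisj : Pairwise (Function.onFun Disjoint A) := fun j j' hjj' =>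
    disjoint_left.2 fun i hi hi' => by
      simp only [A, mem_sdiff, mem_filter, mem_univ, true_and] at hi hi'
      exact hi.2 (hHT hjj' ⟨hi.1, hi'.1⟩)
  calc (k - 1) * (Fintype.card F + 1) = ∑ _j : Option F, (k - 1) := by simp [mul_comm]
    _ ≤ ∑ j, #(A j) := sum_le_sum fun j _ => hA j
    _ = #(univ.biUnion A) := (card_biUnion fun j _ j' _ h => hAdisj h).symm
    _ ≤ Fintype.card ι := card_le_univ _

end Cutting

section Code

variable {F ι : Type*} [Field F]

variable (C : Submodule F (ι → F)) in
/-- Intrinsically, the `i`-th column of a generator matrix of `C`. -/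
def coordFunctional (i : ι) : Dual F C := LinearMap.proj i ∘ₗ C.subtype

theorem isCutting_coordFunctional {C : Submodule F (ι → F)} [FiniteDimensional F C]
    (hmin : ∀ c ∈ C, c ≠ 0 → ∀ c' ∈ C, {i | c' i ≠ 0} ⊆ {i | c i ≠ 0} → ∃ a : F, c' = a • c) :
    IsCutting F (coordFunctional C) := by
  intro H hH
  set S := span F (coordFunctional C '' {i | coordFunctional C i ∈ H})
  have hcoann : finrank F H.dualCoannihilator = 1 := by
    have := Subspace.finrank_add_finrank_dualCoannihilator_eq H
    rw [Subspace.dual_finrank_eq] at hH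
    omega
  obtain ⟨c, hcH, hc⟩ := exists_mem_ne_zero_of_ne_bot (one_le_finrank_iff.1 hcoann.ge)
  have hHc : H.dualCoannihilator = span F {c} :=
    (eq_of_le_of_finrank_eq (span_singleton_le_iff_mem _ _ |>.2 hcH)
      (by rw [finrank_span_singleton hc, hcoann])).symm
  have hmemH : ∀ i, (c : ι → F) i = 0 → coordFunctional C i ∈ H := fun i hi => by
    rw [← Subspace.dualCoannihilator_dualAnnihilator_eq (W := H), hHc, mem_dualAnnihilator]
    intro x hx
    obtain ⟨a, rfl⟩ := mem_span_singleton.1 hx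
    simp [coordFunctional, hi]
  have hSH : S.dualCoannihilator ≤ H.dualCoannihilator := fun c' hc' => by
    have hsupp : {i | (c' : ι → F) i ≠ 0} ⊆ {i | (c : ι → F) i ≠ 0} := fun i hi hci =>
      hi <| (mem_dualCoannihilator _).1 hc' _ (subset_span ⟨i, hmemH i hci, rfl⟩)
    obtain ⟨a, ha⟩ := hmin c c.2 (by simpa using hc) c' c'.2 hsupp
    exact hHc ▸ mem_span_singleton.2 ⟨a, Subtype.ext ha.symm⟩
  refine le_antisymm (span_le.2 fun _ ⟨i, hi, hφ⟩ => hφ ▸ hi) ?_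
  rw [← Subspace.dualCoannihilator_dualAnnihilator_eq (W := H),
    ← Subspace.dualCoannihilator_dualAnnihilator_eq (W := S)]
  exact dualAnnihilator_anti hSH

end Code

/-- If `C` is a minimal linear code of length `n` and dimension `k` over a finite field
with `q` elements, then `n ≥ (k-1)(q+1)`. -/
theorem minimal_code_length_bound (F : Type*) [Field F] [Fintype F] (n : ℕ)
    (C : Submodule F (Fin n → F))
    (hmin : ∀ c ∈ C, c ≠ 0 → ∀ c' ∈ C, {i | c' i ≠ 0} ⊆ {i | c i ≠ 0} →
      ∃ a : F, c' = a • c) :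
    (Module.finrank F C - 1) * (Fintype.card F + 1) ≤ n := by
  have := (isCutting_coordFunctional hmin).finrank_sub_one_mul_le_card
  rwa [Subspace.dual_finrank_eq, Fintype.card_fin] at this
end

section
/- A non-degenerate [n,k]_q linear code C with generator matrix G = (G_1, ..., G_n) is minimal if and only if the multiset of points {G_1, ..., G_n} in PG(k-1,q) is a strong blocking set, i.e., for every hyperplane σ of PG(k-1,q), the intersection of σ with the point set spans σ. -/
/-!
Codewords of the code spanned by the rows of `G` are exactly the vectors `(θ G_j)_j` for linear
functionals `θ` on `F^k`, and `θ ↦ (θ G_j)_j` is injective because the rows are independent.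
The support of the codeword of `ψ` lies in that of `θ` iff `ψ` vanishes on the columns in the
hyperplane `ker θ`, and `c_ψ` is a multiple of `c_θ` iff `ψ` is a multiple of `θ`. So minimality
says that every functional vanishing on the columns in `ker θ` vanishes on `ker θ`, which by
duality means that these columns span `ker θ`; every hyperplane is such a kernel.
-/

open Module Submodule LinearMap

section

variable {K V ι : Type*} [Field K] [AddCommGroup V] [Module K V]

def IsMinimalCode (C : Submodule K (ι → K)) : Prop :=
  ∀ c ∈ C, c ≠ 0 → ∀ c' ∈ C, {i | c' i ≠ 0} ⊆ {i | c i ≠ 0} → ∃ a : K, c' = a • c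

variable (K) in
/-- Hyperplanes are the subspaces of codimension one; when `finrank K V = 0` the truncated
subtraction lets `H = ⊥` through, for which the condition holds trivially. -/
def IsStrongBlockingSet (S : Set V) : Prop :=
  ∀ H : Submodule K V, finrank K H = finrank K V - 1 → span K (S ∩ H) = H

variable (K) in
/-- The code of the projective system `v`, parametrized by the dual space. -/
def codewordMap (v : ι → V) : Dual K V →ₗ[K] ι → K :=
  LinearMap.pi fun j => Dual.eval K V (v j)

@[simp]
lemma codewordMap_apply (v : ι → V) (θ : Dual K V) (j : ι) : codewordMap K v θ j = θ (v j) := rfl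

lemma support_codewordMap_subset_iff (v : ι → V) (θ ψ : Dual K V) :
    {j | codewordMap K v ψ j ≠ 0} ⊆ {j | codewordMap K v θ j ≠ 0} ↔
      span K (Set.range v ∩ ker θ) ≤ ker ψ := by
  rw [span_le]
  constructor
  · rintro h _ ⟨⟨j, rfl⟩, hθ⟩
    by_contra hψ
    exact h hψ hθ
  · intro h j hψ hθ
    exact hψ (h ⟨⟨j, rfl⟩, hθ⟩)

lemma isMinimalCode_range_codewordMap_iff_forall_span_le_ker {v : ι → V}
    (hv : Function.Injective (codewordMap K v)) :
    IsMinimalCode (range (codewordMap K v)) ↔ ∀ θ : Dual K V, θ ≠ 0 →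
      ∀ ψ : Dual K V, span K (Set.range v ∩ ker θ) ≤ ker ψ → ∃ a : K, ψ = a • θ := by
  simp only [IsMinimalCode, mem_range, forall_exists_index, forall_apply_eq_imp_iff, ne_eq,
    map_eq_zero_iff _ hv, support_codewordMap_subset_iff, ← map_smul, hv.eq_iff]

lemma eq_ker_iff_forall_le_ker {W : Submodule K V} {θ : Dual K V} (hW : W ≤ ker θ) :
    W = ker θ ↔ ∀ ψ : Dual K V, W ≤ ker ψ → ∃ a : K, ψ = a • θ := by
  constructor
  · rintro rfl ψ hψ
    have : ψ ∈ K ∙ θ := by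
      simpa using mem_span_of_iInf_ker_le_ker (L := fun _ : Unit => θ) (by simpa using hψ)
    obtain ⟨a, ha⟩ := mem_span_singleton.mp this
    exact ⟨a, ha.symm⟩
  · intro h
    refine le_antisymm hW fun x hx => ?_
    by_contra hxW
    obtain ⟨ψ, hψx, hψW⟩ := exists_dual_map_eq_bot_of_notMem hxW inferInstance
    obtain ⟨a, rfl⟩ := h ψ (le_ker_iff_map.mpr hψW)
    exact hψx (by simp [mem_ker.mp hx])

lemma exists_ker_eq_of_finrank_add_one_eq [FiniteDimensional K V] {H : Submodule K V}
    (hH : finrank K H + 1 = finrank K V) : ∃ θ : Dual K V, θ ≠ 0 ∧ ker θ = H := by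
  have hH_ne_top : H ≠ ⊤ := by
    rintro rfl
    simp at hH
  obtain ⟨x, -, hx⟩ := SetLike.exists_of_lt hH_ne_top.lt_top
  obtain ⟨θ, hθx, hθH⟩ := exists_dual_map_eq_bot_of_notMem hx inferInstance
  have hθ : θ ≠ 0 := by
    rintro rfl
    exact hθx rfl
  refine ⟨θ, hθ, (eq_of_le_of_finrank_eq (le_ker_iff_map.mpr hθH) ?_).symm⟩
  have := θ.finrank_ker_add_one_of_ne_zero hθ
  omega

lemma isStrongBlockingSet_iff_forall_ker [FiniteDimensional K V] {S : Set V} :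
    IsStrongBlockingSet K S ↔ ∀ θ : Dual K V, θ ≠ 0 → span K (S ∩ ker θ) = ker θ := by
  constructor
  · intro h θ hθ
    have := θ.finrank_ker_add_one_of_ne_zero hθ
    exact h _ (by omega)
  · intro h H hH
    rcases Nat.eq_zero_or_pos (finrank K V) with hV | hV
    · have hH_bot : H = ⊥ := finrank_eq_zero.mp (by omega)
      exact (span_le.mpr Set.inter_subset_right).antisymm (hH_bot ▸ bot_le)
    · obtain ⟨θ, hθ, rfl⟩ := exists_ker_eq_of_finrank_add_one_eq (H := H) (by omega)
      exact h θ hθ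

theorem isMinimalCode_range_codewordMap_iff_isStrongBlockingSet [FiniteDimensional K V]
    {v : ι → V} (hv : Function.Injective (codewordMap K v)) :
    IsMinimalCode (range (codewordMap K v)) ↔ IsStrongBlockingSet K (Set.range v) := by
  rw [isMinimalCode_range_codewordMap_iff_forall_span_le_ker hv,
    isStrongBlockingSet_iff_forall_ker]
  exact forall₂_congr fun θ _ =>
    (eq_ker_iff_forall_le_ker (span_le.mpr Set.inter_subset_right)).symm

end

section

variable {K ι κ : Type*} [Field K] [Fintype κ]

lemma codewordMap_comp_piEquiv (G : κ → ι → K) :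
    codewordMap K (fun j i => G i j) ∘ₗ (piEquiv κ K K).toLinearMap =
      Fintype.linearCombination K G := by
  ext x j
  simp [piEquiv_apply_apply, Fintype.linearCombination_apply, mul_comm]

lemma range_codewordMap_transpose (G : κ → ι → K) :
    range (codewordMap K (fun j i => G i j)) = span K (Set.range G) := by
  rw [← range_comp_of_range_eq_top _ (LinearEquiv.range (piEquiv κ K K)),
    codewordMap_comp_piEquiv, Fintype.range_linearCombination]

lemma injective_codewordMap_transpose {G : κ → ι → K} (hG : LinearIndependent K G) :
    Function.Injective (codewordMap K (fun j i => G i j)) := by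
  have := hG.fintypeLinearCombination_injective
  rw [← codewordMap_comp_piEquiv, coe_comp] at this
  exact this.of_comp_right (piEquiv κ K K).surjective

end

theorem minimal_code_iff_strong_blocking_set_general (F : Type*) [Field F] (n k : ℕ)
    (G : Matrix (Fin k) (Fin n) F)
    (hindep : LinearIndependent F G) :
    (∀ c ∈ Submodule.span F (Set.range G), c ≠ 0 →
      ∀ c' ∈ Submodule.span F (Set.range G), {i | c' i ≠ 0} ⊆ {i | c i ≠ 0} →
        ∃ a : F, c' = a • c)
    ↔
    (∀ H : Submodule F (Fin k → F), Module.finrank F H = k - 1 →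
      Submodule.span F {v : Fin k → F | (∃ j : Fin n, v = fun i => G i j) ∧ v ∈ H} = H) := by
  have key := isMinimalCode_range_codewordMap_iff_isStrongBlockingSet
    (injective_codewordMap_transpose hindep)
  rw [range_codewordMap_transpose (G := G)] at key
  have hcolumns (H : Submodule F (Fin k → F)) :
      {v : Fin k → F | (∃ j : Fin n, v = fun i => G i j) ∧ v ∈ H} =
        Set.range (fun j i => G i j) ∩ H :=
    Set.ext fun v => and_congr_left' (exists_congr fun j => eq_comm)
  simpa only [IsMinimalCode, IsStrongBlockingSet, finrank_fin_fun, hcolumns] using key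

/-- A non-degenerate `[n,k]_q` code with generator matrix `G` is minimal iff the columns
of `G`, viewed as points of `PG(k-1,q)`, form a strong blocking set: every hyperplane is
spanned by the columns lying in it. -/
theorem minimal_code_iff_strong_blocking_set (F : Type*) [Field F] [Fintype F] (n k : ℕ)
    (G : Matrix (Fin k) (Fin n) F)
    (hindep : LinearIndependent F G)
    (hnondeg : ∀ j : Fin n, (fun i => G i j) ≠ 0) :
    (∀ c ∈ Submodule.span F (Set.range G), c ≠ 0 →
      ∀ c' ∈ Submodule.span F (Set.range G), {i | c' i ≠ 0} ⊆ {i | c i ≠ 0} →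
        ∃ a : F, c' = a • c)
    ↔
    (∀ H : Submodule F (Fin k → F), Module.finrank F H = k - 1 →
      Submodule.span F {v : Fin k → F | (∃ j : Fin n, v = fun i => G i j) ∧ v ∈ H} = H) :=
  minimal_code_iff_strong_blocking_set_general F n k G hindep
end

section
/- A hyperbolic quadric Q+(3,2) in PG(3,2) (the 9-point zero set of the quadratic form x_0 x_1 + x_2 x_3) is a strong blocking set: every plane of PG(3,2) intersects it in a set that spans the plane. -/
/-- The underlying vector space `F_2^4` of `PG(3,2)`; since the only nonzero scalar of
`F_2` is `1`, points of `PG(3,2)` are identified with nonzero vectors of `V`. -/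
abbrev V : Type := Fin 4 → ZMod 2

/-- Planes of `PG(3,2)` are the 3-dimensional subspaces of `F_2^4`. -/
def IsPlane (σ : Submodule (ZMod 2) V) : Prop := Module.finrank (ZMod 2) σ = 3

/-- Lines of `PG(3,2)` are the 2-dimensional subspaces of `F_2^4`. -/
def IsLine (l : Submodule (ZMod 2) V) : Prop := Module.finrank (ZMod 2) l = 2

/-- A strong blocking set in `PG(3,2)`: a set of (nonzero) points such that for every
plane `σ`, the points of `S` lying in `σ` span `σ`. -/
def IsSBS (S : Set V) : Prop :=
  (∀ v ∈ S, v ≠ 0) ∧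
  ∀ σ : Submodule (ZMod 2) V, IsPlane σ →
    Submodule.span (ZMod 2) (S ∩ (σ : Set V)) = σ

/-- The hyperbolic quadric `Q⁺(3,2)`: the 9 points of `PG(3,2)` satisfying
`x₀x₁ + x₂x₃ = 0`. -/
def Quad : Set V := {x : V | x ≠ 0 ∧ x 0 * x 1 + x 2 * x 3 = 0}

/-- The point set of a line `l`, i.e. its nonzero vectors. -/
def linePts (l : Submodule (ZMod 2) V) : Set V := (l : Set V) \ {0}

/-! Every plane of `PG(3,2)` is the kernel of a dot product `x ↦ c ⬝ᵥ x`. Checking the 16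
vectors `c` shows that each such plane contains three non-collinear points of the quadric (a
conic if the plane is not tangent, two lines if it is). Over `F_2`, three points are
non-collinear exactly when no nonempty subfamily sums to zero, i.e. when they are linearly
independent, so they span the 3-dimensional plane. -/

open Module

theorem Submodule.exists_dotProduct_eq_zero_iff_mem {K ι : Type*} [Field K] [Fintype ι]
    [DecidableEq ι] (σ : Submodule K (ι → K)) (hσ : finrank K σ + 1 = Fintype.card ι) :
    ∃ c : ι → K, ∀ x, x ∈ σ ↔ c ⬝ᵥ x = 0 := by
  have hquot : finrank K ((ι → K) ⧸ σ) = finrank K K := by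
    have := σ.finrank_quotient_add_finrank
    rw [finrank_fintype_fun_eq_card] at this
    rw [finrank_self]
    omega
  let f : Dual K (ι → K) := (LinearEquiv.ofFinrankEq _ _ hquot).toLinearMap ∘ₗ σ.mkQ
  refine ⟨(dotProductEquiv K ι).symm f, fun x => ?_⟩
  rw [← dotProductEquiv_apply_apply, LinearEquiv.apply_symm_apply, ← LinearMap.mem_ker,
    LinearMap.ker_comp, LinearEquiv.ker, Submodule.comap_bot, Submodule.ker_mkQ]

theorem Submodule.span_eq_of_linearIndependent_of_finrank_eq {K M : Type*} [DivisionRing K]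
    [AddCommGroup M] [Module K M] {p : Submodule K M} [FiniteDimensional K p] {s : Set M}
    (hs : s ⊆ p) {n : ℕ} {v : Fin n → M} (hv : LinearIndependent K v) (hvs : ∀ i, v i ∈ s)
    (hp : finrank K p = n) : span K s = p := by
  have hle : span K s ≤ p := span_le.mpr hs
  have : FiniteDimensional K (span K s) := finiteDimensional_of_le hle
  refine eq_of_le_of_finrank_le hle ?_
  calc finrank K p = finrank K (span K (Set.range v)) := by
        rw [finrank_span_eq_card hv, hp, Fintype.card_fin]
    _ ≤ finrank K (span K s) := finrank_mono (span_mono (Set.range_subset_iff.mpr hvs))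

theorem linearIndependent_fin3_of_sums_ne_zero {M : Type*} [AddCommGroup M] [Module (ZMod 2) M]
    {x y z : M} (hx : x ≠ 0) (hy : y ≠ 0) (hz : z ≠ 0) (hxy : x + y ≠ 0) (hxz : x + z ≠ 0)
    (hyz : y + z ≠ 0) (hxyz : x + y + z ≠ 0) :
    LinearIndependent (ZMod 2) ![x, y, z] := by
  rw [Fintype.linearIndependent_iff]
  intro g hg
  have hsum : g 0 • x + g 1 • y + g 2 • z = 0 := by
    simpa [Fin.sum_univ_three] using hg
  have hbool : ∀ a : ZMod 2, a = 0 ∨ a = 1 := by decide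
  rcases hbool (g 0) with h0 | h0 <;> rcases hbool (g 1) with h1 | h1 <;>
    rcases hbool (g 2) with h2 | h2 <;>
    simp only [h0, h1, h2, one_smul, zero_smul, zero_add, add_zero] at hsum
  · intro i
    fin_cases i <;> assumption
  exacts [absurd hsum hz, absurd hsum hy, absurd hsum hyz, absurd hsum hx, absurd hsum hxz,
    absurd hsum hxy, absurd hsum hxyz]

set_option maxRecDepth 100000 in
set_option synthInstance.maxSize 400 in
theorem exists_noncollinear_quad_points_orthogonal : ∀ c : V, ∃ x y z : V,
    (x ≠ 0 ∧ x 0 * x 1 + x 2 * x 3 = 0 ∧ c ⬝ᵥ x = 0) ∧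
    (y ≠ 0 ∧ y 0 * y 1 + y 2 * y 3 = 0 ∧ c ⬝ᵥ y = 0) ∧
    (z ≠ 0 ∧ z 0 * z 1 + z 2 * z 3 = 0 ∧ c ⬝ᵥ z = 0) ∧
    x + y ≠ 0 ∧ x + z ≠ 0 ∧ y + z ≠ 0 ∧ x + y + z ≠ 0 := by
  decide

theorem exists_linearIndependent_quad_inter_plane {σ : Submodule (ZMod 2) V}
    (hσ : IsPlane σ) :
    ∃ v : Fin 3 → V, LinearIndependent (ZMod 2) v ∧ ∀ i, v i ∈ Quad ∩ (σ : Set V) := by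
  obtain ⟨c, hc⟩ :=
    σ.exists_dotProduct_eq_zero_iff_mem (by rw [show finrank _ σ = 3 from hσ]; rfl)
  obtain ⟨x, y, z, ⟨hx0, hxQ, hxc⟩, ⟨hy0, hyQ, hyc⟩, ⟨hz0, hzQ, hzc⟩, hxy, hxz, hyz, hxyz⟩ :=
    exists_noncollinear_quad_points_orthogonal c
  refine ⟨![x, y, z], linearIndependent_fin3_of_sums_ne_zero hx0 hy0 hz0 hxy hxz hyz hxyz, ?_⟩
  intro i
  fin_cases i
  exacts [⟨⟨hx0, hxQ⟩, (hc x).2 hxc⟩, ⟨⟨hy0, hyQ⟩, (hc y).2 hyc⟩,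
    ⟨⟨hz0, hzQ⟩, (hc z).2 hzc⟩]

/-- The hyperbolic quadric `Q⁺(3,2)` is a strong blocking set in `PG(3,2)`:
every plane intersects it in a set spanning the plane. -/
theorem quadric_is_strong_blocking_set : IsSBS Quad := by
  refine ⟨fun v hv => hv.1, fun σ hσ => ?_⟩
  obtain ⟨v, hv, hvσ⟩ := exists_linearIndependent_quad_inter_plane hσ
  exact Submodule.span_eq_of_linearIndependent_of_finrank_eq Set.inter_subset_right hv hvσ hσ
end

section
/- Let S be a strong blocking set of size 9 in PG(3,2) and P a point of S. Then there are at most 2 lines through P entirely contained in S. -/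
/-!
Suppose three lines `⟨aᵢ, P⟩` through `P` lie in `S`; they account for 7 of its 9 points.

If they are coplanar, they cover their plane `π`, so only two points `x`, `y` of `S` lie off `π`.
Writing `π = ker φ` and taking `ψ ≠ 0` vanishing on `x`, `y` and some vector off `π`, the plane
`σ = ker (φ + ψ)` differs from `π` and avoids `x` and `y`; then `S ∩ σ` lies in the line `π ∩ σ`.

Otherwise choose coordinates in which `P = 𝐞 3` and the lines are `⟨𝐞 i, 𝐞 3⟩`, `i = 0, 1, 2`.
The plane `x₀ + x₁ + x₂ = 0` meets the lines only in `P`, so it contains both remaining points.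
The plane `x_j + x_k = 0` (`{i, j, k} = {0, 1, 2}`) meets the lines only in `⟨𝐞 i, 𝐞 3⟩`, so it
needs a remaining point off that line, i.e. `𝐞 j + 𝐞 k` or `𝐞 j + 𝐞 k + 𝐞 3`. These three pairs
are disjoint, and two points cannot meet all of them.
-/

open Module Submodule

section ZModTwo

variable {M : Type*} [AddCommGroup M] [Module (ZMod 2) M]

lemma sub_mem_span_singleton_of_mem_span_triple {a b P z : M}
    (hz : z ∈ span (ZMod 2) {a, b, P}) (hza : z ∉ span (ZMod 2) {a, P})
    (hzb : z ∉ span (ZMod 2) {b, P}) : z - (a + b) ∈ (ZMod 2) ∙ P := by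
  obtain ⟨c, y, hy, rfl⟩ := mem_span_insert.1 hz
  obtain ⟨d, t, ht, rfl⟩ := mem_span_insert.1 hy
  have hx : ∀ {x : M}, x ∈ span (ZMod 2) {x, P} := subset_span (Set.mem_insert _ _)
  have hPx : ∀ x : M, (ZMod 2) ∙ P ≤ span (ZMod 2) {x, P} := fun x => span_mono (by simp)
  have h01 : ∀ c : ZMod 2, c = 0 ∨ c = 1 := by decide
  rcases h01 c with rfl | rfl <;> rcases h01 d with rfl | rfl
  · exact absurd (by simpa using hPx b ht) hzb
  · exact absurd (by simpa using add_mem hx (hPx b ht)) hzb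
  · exact absurd (by simpa using add_mem hx (hPx a ht)) hza
  · simpa [add_sub_add_comm, ← add_assoc] using ht

lemma mem_span_pair_of_mem_span_triple {a b P z w : M}
    (hz : z ∈ span (ZMod 2) {a, b, P}) (hza : z ∉ span (ZMod 2) {a, P})
    (hzb : z ∉ span (ZMod 2) {b, P}) (hw : w ∈ span (ZMod 2) {a, b, P})
    (hwa : w ∉ span (ZMod 2) {a, P}) (hwb : w ∉ span (ZMod 2) {b, P}) :
    z ∈ span (ZMod 2) {w, P} := by
  have hzw : z - w ∈ (ZMod 2) ∙ P := by
    simpa using sub_mem (sub_mem_span_singleton_of_mem_span_triple hz hza hzb)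
      (sub_mem_span_singleton_of_mem_span_triple hw hwa hwb)
  rw [← add_sub_cancel w z]
  exact add_mem (subset_span (Set.mem_insert _ _)) (span_mono (Set.subset_insert _ _) hzw)

end ZModTwo

section Field

variable {K M : Type*} [Field K] [AddCommGroup M] [Module K M]

lemma finrank_span_le_ncard {s : Set M} (hs : s.Finite) : finrank K (span K s) ≤ s.ncard := by
  have := hs.fintype
  rw [Set.ncard_eq_toFinset_card']
  exact finrank_span_le_card s

lemma linearIndependent_vec_four {a b c P : M} (hP : P ≠ 0) (hc : c ∉ K ∙ P)
    (hb : b ∉ span K {c, P}) (ha : a ∉ span K {b, c, P}) : LinearIndependent K ![a, b, c, P] := by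
  refine linearIndependent_finCons.2 ⟨linearIndependent_finCons.2
    ⟨linearIndependent_finCons.2 ⟨linearIndependent_unique_iff.2 hP, ?_⟩, ?_⟩, ?_⟩
  all_goals
    simpa only [Matrix.range_cons, Matrix.range_empty, Set.union_empty, Set.singleton_union]

variable [FiniteDimensional K M]

lemma exists_eq_span_pair_of_finrank_eq_two {l : Submodule K M} (hl : finrank K l = 2) {P : M}
    (hP : P ∈ l) (hP₀ : P ≠ 0) : ∃ a ∉ K ∙ P, l = span K {a, P} := by
  obtain ⟨a, hal, ha⟩ : ∃ a ∈ l, a ∉ K ∙ P := by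
    by_contra! h
    have := finrank_mono (show l ≤ K ∙ P from h)
    rw [finrank_span_singleton hP₀] at this
    omega
  have hle : span K {a, P} ≤ l := span_le.2 (Set.insert_subset hal (by simpa using hP))
  have hlt : K ∙ P < span K {a, P} :=
    SetLike.lt_iff_le_and_exists.2 ⟨span_mono (by simp), a, subset_span (by simp), ha⟩
  refine ⟨a, ha, (eq_of_le_of_finrank_le hle ?_).symm⟩
  have := finrank_lt_finrank_of_lt hlt
  rw [finrank_span_singleton hP₀] at this
  omega

lemma notMem_of_ne_span_pair {l : Submodule K M} {a P : M} (hne : l ≠ span K {a, P})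
    (hfin : finrank K l ≤ finrank K (span K {a, P})) (hP : P ∈ l) : a ∉ l := fun ha =>
  hne (eq_of_le_of_finrank_le (span_le.2 (Set.insert_subset ha (by simpa using hP))) hfin).symm

lemma exists_linearEquiv_apply_eq_single {n : ℕ} {v : Fin n → M} (hv : LinearIndependent K v)
    (hn : finrank K M = n) : ∃ e : M ≃ₗ[K] (Fin n → K), ∀ i, e (v i) = Pi.single i 1 := by
  let b := basisOfLinearIndependentOfCardEqFinrank' v hv (by simp [hn])
  have hb : ∀ i, b i = v i := fun i => by simp [b]
  exact ⟨b.equivFun, fun i => by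
    rw [← hb, Basis.equivFun_apply, Basis.repr_self, Finsupp.single_eq_pi_single]⟩

end Field

lemma exists_subset_insert_insert_of_ncard_eq {α : Type*} {S K : Set α} (hKS : K ⊆ S)
    (hS : S.Finite) (hcard : S.ncard = K.ncard + 2) : ∃ x y, S ⊆ insert x (insert y K) := by
  have : (S \ K).ncard = 2 := by
    have := Set.ncard_sdiff_add_ncard_of_subset hKS hS
    omega
  obtain ⟨x, y, -, hxy⟩ := Set.ncard_eq_two.1 this
  refine ⟨x, y, fun z hz => ?_⟩
  by_cases hzK : z ∈ K
  · exact Set.mem_insert_of_mem _ (Set.mem_insert_of_mem _ hzK)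
  · have : z ∈ ({x, y} : Set α) := hxy ▸ ⟨hz, hzK⟩
    rcases this with rfl | rfl
    exacts [Set.mem_insert _ _, Set.mem_insert_of_mem _ (Set.mem_insert _ _)]

lemma isPlane_ker {φ : Module.Dual (ZMod 2) V} (hφ : φ ≠ 0) : IsPlane (LinearMap.ker φ) := by
  have := φ.finrank_ker_add_one_of_ne_zero hφ
  rw [Module.finrank_fin_fun] at this
  exact (Nat.add_right_cancel this : _)

lemma IsPlane.exists_ker_eq {π : Submodule (ZMod 2) V} (hπ : IsPlane π) :
    ∃ φ : Module.Dual (ZMod 2) V, φ ≠ 0 ∧ LinearMap.ker φ = π := by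
  have hlt : π < ⊤ := lt_top_iff_ne_top.2 fun h => by
    have : finrank (ZMod 2) π = 4 := by rw [h, finrank_top, Module.finrank_fin_fun]
    rw [hπ] at this
    omega
  obtain ⟨φ, hφ, hπφ⟩ := π.exists_dual_map_eq_bot_of_lt_top hlt inferInstance
  exact ⟨φ, hφ, (eq_of_le_of_finrank_eq (LinearMap.le_ker_iff_map.2 hπφ)
    (hπ.trans (isPlane_ker hφ).symm)).symm⟩

lemma IsPlane.exists_isPlane_not_le_disjoint {π : Submodule (ZMod 2) V} (hπ : IsPlane π)
    {T : Set V} (hT : T.ncard ≤ 2) (hTπ : Disjoint T π) :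
    ∃ σ, IsPlane σ ∧ ¬σ ≤ π ∧ Disjoint T σ := by
  obtain ⟨φ, hφ, rfl⟩ := hπ.exists_ker_eq
  obtain ⟨w, hw⟩ := DFunLike.ne_iff.1 hφ
  have hlt : span (ZMod 2) (insert w T) < ⊤ := by
    refine lt_top_iff_ne_top.2 fun h => ?_
    have := (finrank_span_le_ncard (K := ZMod 2) (Set.toFinite (insert w T))).trans
      (Set.ncard_insert_le w T)
    rw [h, finrank_top, Module.finrank_fin_fun] at this
    omega
  obtain ⟨ψ, hψ, hψT⟩ := exists_dual_map_eq_bot_of_lt_top hlt inferInstance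
  have hψ₀ : ∀ t ∈ insert w T, ψ t = 0 := fun t ht =>
    LinearMap.le_ker_iff_map.2 hψT (subset_span ht)
  have hψw : ψ w = 0 := hψ₀ w (Set.mem_insert w T)
  obtain ⟨v, hv⟩ := DFunLike.ne_iff.1 hψ
  obtain ⟨z, hφz, hψz⟩ : ∃ z, φ z ≠ 0 ∧ ψ z ≠ 0 := by
    by_cases hφv : φ v = 0
    · exact ⟨v + w, by simpa [hφv] using hw, by simpa [hψw] using hv⟩
    · exact ⟨v, hφv, hv⟩
  have hZMod : ∀ a b : ZMod 2, a ≠ 0 → b ≠ 0 → a + b = 0 := by decide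
  refine ⟨LinearMap.ker (φ + ψ), isPlane_ker ?_, fun hle => hφz (hle (hZMod _ _ hφz hψz)), ?_⟩
  · exact DFunLike.ne_iff.2 ⟨w, by simpa [hψw] using hw⟩
  · refine Set.disjoint_left.2 fun t htT htσ => Set.disjoint_left.1 hTπ htT ?_
    simpa [hψ₀ t (Set.mem_insert_of_mem w htT)] using htσ

lemma isPlane_span_triple {a b P : V} (hl : IsLine (span (ZMod 2) {b, P}))
    (ha : a ∉ span (ZMod 2) {b, P}) : IsPlane (span (ZMod 2) {a, b, P}) := by
  have hlt : span (ZMod 2) {b, P} < span (ZMod 2) {a, b, P} :=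
    SetLike.lt_iff_le_and_exists.2 ⟨span_mono (Set.subset_insert _ _), a, subset_span (by simp), ha⟩
  have h₁ := finrank_lt_finrank_of_lt hlt
  have h₂ : finrank (ZMod 2) (span (ZMod 2) {a, b, P}) ≤ 3 :=
    (finrank_span_le_ncard (Set.toFinite _)).trans
      ((Set.ncard_insert_le _ _).trans (by grw [Set.ncard_insert_le]; simp))
  rw [hl] at h₁
  exact le_antisymm h₂ h₁

lemma mem_and_add_mem_of_linePts_subset {S : Set V} {a P : V} (ha : a ∉ (ZMod 2) ∙ P)
    (h : linePts (span (ZMod 2) {a, P}) ⊆ S) : a ∈ S ∧ a + P ∈ S := by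
  refine ⟨h ⟨subset_span (by simp), ?_⟩,
    h ⟨add_mem (subset_span (by simp)) (subset_span (by simp)), ?_⟩⟩
  · rintro rfl
    exact ha (zero_mem _)
  · intro h0
    exact ha (by rw [eq_neg_of_add_eq_zero_left h0]; exact neg_mem (mem_span_singleton_self P))

lemma sdiff_zero_subset_of_linePts_subset {S : Set V} {a₁ a₂ a₃ P : V}
    (h₁ : linePts (span (ZMod 2) {a₁, P}) ⊆ S) (h₂ : linePts (span (ZMod 2) {a₂, P}) ⊆ S)
    (h₃ : linePts (span (ZMod 2) {a₃, P}) ⊆ S) (ha₃ : a₃ ∈ span (ZMod 2) {a₁, a₂, P})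
    (ha₃₁ : a₃ ∉ span (ZMod 2) {a₁, P}) (ha₃₂ : a₃ ∉ span (ZMod 2) {a₂, P}) :
    (span (ZMod 2) {a₁, a₂, P} : Set V) \ {0} ⊆ S := by
  rintro z ⟨hz, hz₀⟩
  by_cases hz₁ : z ∈ span (ZMod 2) {a₁, P}
  · exact h₁ ⟨hz₁, hz₀⟩
  by_cases hz₂ : z ∈ span (ZMod 2) {a₂, P}
  · exact h₂ ⟨hz₂, hz₀⟩
  exact h₃ ⟨mem_span_pair_of_mem_span_triple hz hz₁ hz₂ ha₃ ha₃₁ ha₃₂, hz₀⟩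

namespace IsSBS

variable {S : Set V}

lemma le_of_inter_subset (hS : IsSBS S) {σ W : Submodule (ZMod 2) V} (hσ : IsPlane σ)
    (h : S ∩ σ ⊆ W) : σ ≤ W := by
  rw [← hS.2 σ hσ]
  exact span_le.2 h

lemma exists_mem_notMem (hS : IsSBS S) {σ W : Submodule (ZMod 2) V} (hσ : IsPlane σ)
    (hW : finrank (ZMod 2) W < 3) : ∃ z ∈ S, z ∈ σ ∧ z ∉ W := by
  by_contra! h
  have := finrank_mono (hS.le_of_inter_subset hσ fun z hz => h z hz.1 hz.2)
  rw [hσ] at this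
  omega

lemma exists_mem_dotProduct_eq_zero (hS : IsSBS S) {f : V} (hf : f ≠ 0) (u v : V) :
    ∃ z ∈ S, f ⬝ᵥ z = 0 ∧ z ≠ u ∧ z ≠ v ∧ z ≠ u + v := by
  have hW : finrank (ZMod 2) (span (ZMod 2) {u, v}) < 3 :=
    (finrank_span_le_ncard (Set.toFinite _)).trans_lt
      ((Set.ncard_insert_le u {v}).trans_lt (by simp))
  obtain ⟨z, hzS, hzσ, hzW⟩ := hS.exists_mem_notMem
    (isPlane_ker ((dotProductEquiv (ZMod 2) (Fin 4)).map_ne_zero_iff.2 hf)) hW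
  refine ⟨z, hzS, by simpa using hzσ, ?_, ?_, ?_⟩ <;> rintro rfl <;> apply hzW
  · exact subset_span (by simp)
  · exact subset_span (by simp)
  · exact add_mem (subset_span (by simp)) (subset_span (by simp))

lemma image (hS : IsSBS S) (e : V ≃ₗ[ZMod 2] V) : IsSBS (e '' S) := by
  refine ⟨by rintro _ ⟨v, hv, rfl⟩; simpa using hS.1 v hv, fun σ hσ => ?_⟩
  have hσ' : IsPlane (σ.comap (e : V →ₗ[ZMod 2] V)) := by
    rw [IsPlane, comap_equiv_eq_map_symm, LinearEquiv.finrank_map_eq]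
    exact hσ
  calc span (ZMod 2) (e '' S ∩ σ)
      = (span (ZMod 2) (S ∩ σ.comap (e : V →ₗ[ZMod 2] V))).map (e : V →ₗ[ZMod 2] V) := by
        rw [map_span, ← Set.image_inter_preimage]
        rfl
    _ = σ := by rw [hS.2 _ hσ', map_comap_eq_of_surjective e.surjective]

lemma three_le_ncard_sdiff (hS : IsSBS S) {π : Submodule (ZMod 2) V} (hπ : IsPlane π) :
    3 ≤ (S \ π).ncard := by
  by_contra! h
  obtain ⟨σ, hσ, hσπ, hdisj⟩ :=
    hπ.exists_isPlane_not_le_disjoint (by omega) (Set.disjoint_sdiff_left (t := S))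
  refine hσπ (hS.le_of_inter_subset hσ fun z ⟨hzS, hzσ⟩ => ?_)
  by_contra hzπ
  exact Set.disjoint_left.1 hdisj ⟨hzS, hzπ⟩ hzσ

lemma not_sdiff_zero_subset (hS : IsSBS S) (hcard : S.ncard = 9) {π : Submodule (ZMod 2) V}
    (hπ : IsPlane π) : ¬(π : Set V) \ {0} ⊆ S := by
  intro hπS
  have hπcard : ((π : Set V) \ {0}).ncard = 7 := by
    rw [Set.ncard_sdiff_singleton_of_mem π.zero_mem, ← Nat.card_coe_set_eq,
      SetLike.coe_sort_coe, Module.natCard_eq_pow_finrank (K := ZMod 2), hπ]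
    simp
  have h₁ := Set.ncard_sdiff hπS
  have h₂ : (S \ π).ncard ≤ (S \ ((π : Set V) \ {0})).ncard :=
    Set.ncard_le_ncard (Set.sdiff_subset_sdiff_right Set.sdiff_subset)
  have := hS.three_le_ncard_sdiff hπ
  omega

end IsSBS

local notation:max "𝐞" i:max => (Pi.single i 1 : V)

/-- The points of three non-coplanar lines through a point, in coordinates adapted to them. -/
def tripod : Finset V := {𝐞 3, 𝐞 0, 𝐞 0 + 𝐞 3, 𝐞 1, 𝐞 1 + 𝐞 3, 𝐞 2, 𝐞 2 + 𝐞 3}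

lemma tripod_card : tripod.card = 7 := by decide

lemma eq_of_mem_tripod_of_dotProduct_eq_zero :
    ∀ z ∈ tripod, ![1, 1, 1, 0] ⬝ᵥ z = 0 → z = 𝐞 3 := by
  decide

/-- For `{i, j, k} = {0, 1, 2}`, `![1, 1, 1, 0] + 𝐞 i` defines the plane `x_j + x_k = 0`. -/
lemma exists_plane_meeting_tripod_in_line : ∀ x y : V, ![1, 1, 1, 0] ⬝ᵥ x = 0 →
    ![1, 1, 1, 0] ⬝ᵥ y = 0 → ∃ i : Fin 4, ![1, 1, 1, 0] + 𝐞 i ≠ 0 ∧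
      ∀ z ∈ insert x (insert y tripod), z ≠ 0 → (![1, 1, 1, 0] + 𝐞 i) ⬝ᵥ z = 0 →
        z = 𝐞 i ∨ z = 𝐞 3 ∨ z = 𝐞 i + 𝐞 3 := by
  decide

namespace IsSBS

variable {S : Set V}

lemma false_of_tripod_subset (hS : IsSBS S) (hcard : S.ncard = 9) (hK : ↑tripod ⊆ S) : False := by
  obtain ⟨x, y, hxy⟩ := exists_subset_insert_insert_of_ncard_eq hK (Set.toFinite S)
    (by rw [hcard, Set.ncard_coe_finset, tripod_card])
  have hσ₀ : ∀ {x y}, S ⊆ insert x (insert y ↑tripod) → ![1, 1, 1, 0] ⬝ᵥ x = 0 := by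
    intro x y h
    obtain ⟨z, hzS, hz, hz3, hzy, -⟩ :=
      hS.exists_mem_dotProduct_eq_zero (f := ![1, 1, 1, 0]) (by decide) (𝐞 3) y
    rcases h hzS with rfl | rfl | hzK
    · exact hz
    · exact absurd rfl hzy
    · exact absurd (eq_of_mem_tripod_of_dotProduct_eq_zero z hzK hz) hz3
  obtain ⟨i, hf, hi⟩ := exists_plane_meeting_tripod_in_line x y (hσ₀ hxy)
    (hσ₀ (hxy.trans (Set.insert_comm x y _).subset))
  obtain ⟨z, hzS, hz, hzi, hz3, hzi3⟩ := hS.exists_mem_dotProduct_eq_zero hf (𝐞 i) (𝐞 3)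
  rcases hi z (by simpa using hxy hzS) (hS.1 z hzS) hz with h | h | h <;> contradiction

lemma false_of_linearIndependent (hS : IsSBS S) (hcard : S.ncard = 9) {a₁ a₂ a₃ P : V}
    (hind : LinearIndependent (ZMod 2) ![a₃, a₁, a₂, P]) (hP : P ∈ S)
    (h₁ : a₁ ∈ S ∧ a₁ + P ∈ S) (h₂ : a₂ ∈ S ∧ a₂ + P ∈ S) (h₃ : a₃ ∈ S ∧ a₃ + P ∈ S) : False := by
  obtain ⟨e, he⟩ := exists_linearEquiv_apply_eq_single hind (Module.finrank_fin_fun (ZMod 2))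
  have hmem : ∀ {a b}, a ∈ S → e a = b → b ∈ e '' S := fun ha hab => ⟨_, ha, hab⟩
  have hmem₂ : ∀ {a} i, a ∈ S ∧ a + P ∈ S → e a = 𝐞 i → 𝐞 i ∈ e '' S ∧ 𝐞 i + 𝐞 3 ∈ e '' S :=
    fun i ha hai => ⟨hmem ha.1 hai, hmem ha.2 (by rw [map_add, hai]; exact congrArg _ (he 3))⟩
  refine (hS.image e).false_of_tripod_subset
    (by rwa [Set.ncard_image_of_injective _ e.injective]) ?_
  simp only [tripod, Finset.coe_insert, Finset.coe_singleton, Set.insert_subset_iff,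
    Set.singleton_subset_iff]
  obtain ⟨m₀, m₀'⟩ := hmem₂ 0 h₃ (he 0)
  obtain ⟨m₁, m₁'⟩ := hmem₂ 1 h₁ (he 1)
  obtain ⟨m₂, m₂'⟩ := hmem₂ 2 h₂ (he 2)
  exact ⟨hmem hP (he 3), m₀, m₀', m₁, m₁', m₂, m₂'⟩

end IsSBS

/-- Through a point `P` of a strong blocking set `S` of size 9 in `PG(3,2)` there pass
at most 2 lines entirely contained in `S`. -/
theorem at_most_two_lines_through_point (S : Set V) (hS : IsSBS S) (hcard : S.ncard = 9)
    (P : V) (hP : P ∈ S) :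
    {l : Submodule (ZMod 2) V | IsLine l ∧ P ∈ l ∧ linePts l ⊆ S}.ncard ≤ 2 := by
  by_contra! h
  obtain ⟨l₁, l₂, l₃, ⟨h₁, hP₁, hS₁⟩, ⟨h₂, hP₂, hS₂⟩, ⟨h₃, hP₃, hS₃⟩, h₁₂, h₁₃, h₂₃⟩ :=
    (Set.two_lt_ncard_iff (Set.finite_of_ncard_pos (by omega))).1 h
  have hP₀ := hS.1 P hP
  obtain ⟨a₁, ha₁, rfl⟩ := exists_eq_span_pair_of_finrank_eq_two h₁ hP₁ hP₀
  obtain ⟨a₂, ha₂, rfl⟩ := exists_eq_span_pair_of_finrank_eq_two h₂ hP₂ hP₀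
  obtain ⟨a₃, ha₃, rfl⟩ := exists_eq_span_pair_of_finrank_eq_two h₃ hP₃ hP₀
  have ha₁₂ := notMem_of_ne_span_pair h₁₂.symm (h₂.trans h₁.symm).le hP₂
  have ha₃₁ := notMem_of_ne_span_pair h₁₃ (h₁.trans h₃.symm).le hP₁
  have ha₃₂ := notMem_of_ne_span_pair h₂₃ (h₂.trans h₃.symm).le hP₂
  by_cases hπ : a₃ ∈ span (ZMod 2) {a₁, a₂, P}
  · exact hS.not_sdiff_zero_subset hcard (isPlane_span_triple h₂ ha₁₂)
      (sdiff_zero_subset_of_linePts_subset hS₁ hS₂ hS₃ hπ ha₃₁ ha₃₂)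
  · exact hS.false_of_linearIndependent hcard (linearIndependent_vec_four hP₀ ha₂ ha₁₂ hπ) hP
      (mem_and_add_mem_of_linePts_subset ha₁ hS₁) (mem_and_add_mem_of_linePts_subset ha₂ hS₂)
      (mem_and_add_mem_of_linePts_subset ha₃ hS₃)
end

section
/- The parabolic quadric Q(4,2), the zero set in PG(4,2) of x_0^2 + x_1 x_2 + x_3 x_4, has exactly 15 points and is a strong blocking set in PG(4,2). -/
/-!
A hyperplane `σ` is the kernel of a linear form `f`; if the quadric points in `σ` spanned a
proper subspace, some linear form `g` would vanish on them without vanishing on `σ`. Over `𝔽₂`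
this means `g ∉ {0, f}`, and a finite search shows that for every such pair `(f, g)` some point
of the quadric lies in `ker f` but not in `ker g`.
-/

open Module Matrix

theorem Submodule.span_inter_eq_of_forall_dual {K V : Type*} [Field K] [AddCommGroup V]
    [Module K V] {S : Set V} {σ : Submodule K V}
    (h : ∀ g : Dual K V, ¬σ ≤ LinearMap.ker g → ∃ x ∈ S ∩ σ, g x ≠ 0) :
    Submodule.span K (S ∩ σ) = σ := by
  refine le_antisymm (Submodule.span_le.2 Set.inter_subset_right) fun x hxσ => ?_
  by_contra hx
  obtain ⟨g, hgx, hg⟩ := Submodule.exists_dual_map_eq_bot_of_notMem hx inferInstance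
  rw [← LinearMap.le_ker_iff_map] at hg
  obtain ⟨y, hy, hgy⟩ := h g fun hσ => hgx (hσ hxσ)
  exact hgy (hg (Submodule.subset_span hy))

theorem Submodule.exists_eq_ker_of_finrank_add_one {K V : Type*} [Field K] [AddCommGroup V]
    [Module K V] [FiniteDimensional K V] {σ : Submodule K V}
    (hσ : finrank K σ + 1 = finrank K V) : ∃ f : Dual K V, σ = LinearMap.ker f := by
  have hlt : σ < ⊤ := Submodule.lt_top_of_finrank_lt_finrank (by omega)
  obtain ⟨f, hf, hσf⟩ := Submodule.exists_dual_map_eq_bot_of_lt_top hlt inferInstance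
  refine ⟨f, Submodule.eq_of_le_of_finrank_eq (LinearMap.le_ker_iff_map.2 hσf) ?_⟩
  have := f.finrank_ker_add_one_of_ne_zero hf
  omega

theorem dotProductEquiv_symm_dotProduct {R n : Type*} [CommSemiring R] [Fintype n]
    [DecidableEq n] (f : Dual R (n → R)) (x : n → R) :
    (dotProductEquiv R n).symm f ⬝ᵥ x = f x :=
  LinearMap.congr_fun ((dotProductEquiv R n).apply_symm_apply f) x

def parabolicQuadric : Set (Fin 5 → ZMod 2) :=
  {x | x ≠ 0 ∧ x 0 * x 0 + x 1 * x 2 + x 3 * x 4 = 0}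

theorem ncard_parabolicQuadric : parabolicQuadric.ncard = 15 := by
  rw [parabolicQuadric, Set.ncard_eq_toFinset_card']
  decide

theorem exists_mem_parabolicQuadric_dotProduct : ∀ a b : Fin 5 → ZMod 2, b ≠ 0 → b ≠ a →
    ∃ x ∈ parabolicQuadric, a ⬝ᵥ x = 0 ∧ b ⬝ᵥ x ≠ 0 := by
  unfold parabolicQuadric
  decide

theorem span_parabolicQuadric_inter_hyperplane (σ : Submodule (ZMod 2) (Fin 5 → ZMod 2))
    (hσ : finrank (ZMod 2) σ = 4) :
    Submodule.span (ZMod 2) (parabolicQuadric ∩ σ) = σ := by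
  obtain ⟨f, rfl⟩ := Submodule.exists_eq_ker_of_finrank_add_one (σ := σ) (by simp [hσ])
  refine Submodule.span_inter_eq_of_forall_dual fun g hg => ?_
  let e := dotProductEquiv (ZMod 2) (Fin 5)
  have hg0 : e.symm g ≠ 0 := fun h => hg (by simp [e.symm_apply_eq.1 h])
  have hgf : e.symm g ≠ e.symm f := fun h => hg (e.symm.injective h ▸ le_rfl)
  obtain ⟨x, hxQ, hfx, hgx⟩ := exists_mem_parabolicQuadric_dotProduct _ _ hg0 hgf
  rw [dotProductEquiv_symm_dotProduct] at hfx hgx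
  exact ⟨x, ⟨hxQ, hfx⟩, hgx⟩

/-- The parabolic quadric `Q(4,2)`, the zero set in `PG(4,2)` of
`x₀² + x₁x₂ + x₃x₄`, has exactly 15 points and is a strong blocking set in `PG(4,2)`. -/
theorem parabolic_quadric_sbs :
    {x : Fin 5 → ZMod 2 | x ≠ 0 ∧ x 0 * x 0 + x 1 * x 2 + x 3 * x 4 = 0}.ncard = 15 ∧
    ∀ σ : Submodule (ZMod 2) (Fin 5 → ZMod 2), Module.finrank (ZMod 2) σ = 4 →
      Submodule.span (ZMod 2)
        ({x : Fin 5 → ZMod 2 | x ≠ 0 ∧ x 0 * x 0 + x 1 * x 2 + x 3 * x 4 = 0} ∩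
          (σ : Set (Fin 5 → ZMod 2))) = σ :=
  ⟨ncard_parabolicQuadric, span_parabolicQuadric_inter_hyperplane⟩
end
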